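/- Let U be the set produced by running the Gonzalez greedy algorithm for k steps on a finite metric space (V,d). Then every point v ∈ V satisfies min_{u ∈ U} d(v,u) ≤ div(U); i.e., U is simultaneously a div(U)-cover of V and has minimum pairwise distance div(U). -/

import Mathlib

/-!
Let `u a, u b` with `a < b` realise the minimum distance `div U`. When `u b` was chosen, it was
a farthest point from `{u 0, …, u (b-1)}`, so every `v` has a point of that prefix within
distance `dist (u a) (u b) = div U`.
-/

open scoped Classical

noncomputable def fdiv {V : Type*} [MetricSpace V] (S : Finset V) : ℝ :=
  sInf {r : ℝ | ∃ u ∈ S, ∃ v ∈ S, u ≠ v ∧ r = dist u v}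

section fdiv

variable {V : Type*} [MetricSpace V] {S : Finset V}

theorem fdiv_of_subsingleton (hS : (S : Set V).Subsingleton) : fdiv S = 0 := by
  have hempty : {r : ℝ | ∃ u ∈ S, ∃ v ∈ S, u ≠ v ∧ r = dist u v} = ∅ :=
    Set.eq_empty_of_forall_notMem fun _ ⟨x, hx, y, hy, hxy, _⟩ => hxy (hS hx hy)
  rw [fdiv, hempty, Real.sInf_empty]

theorem exists_ne_dist_eq_fdiv (hS : ¬ (S : Set V).Subsingleton) :
    ∃ x ∈ S, ∃ y ∈ S, x ≠ y ∧ dist x y = fdiv S := by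
  set D := {r : ℝ | ∃ u ∈ S, ∃ v ∈ S, u ≠ v ∧ r = dist u v}
  have hne : D.Nonempty := by
    obtain ⟨x, hx, y, hy, hxy⟩ := Set.not_subsingleton_iff.mp hS
    exact ⟨_, x, hx, y, hy, hxy, rfl⟩
  have hfin : D.Finite := by
    refine (((S ×ˢ S : Finset (V × V)) : Set (V × V)).toFinite.image
      fun p => dist p.1 p.2).subset ?_
    rintro _ ⟨x, hx, y, hy, -, rfl⟩
    exact ⟨(x, y), by simp [hx, hy], rfl⟩
  obtain ⟨x, hx, y, hy, hxy, hmin⟩ := hne.csInf_mem hfin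
  exact ⟨x, hx, y, hy, hxy, hmin.symm⟩

end fdiv

/-- In the degenerate case the first two points coincide and `fdiv` is `0`. -/
theorem exists_lt_dist_le_fdiv_image_range {V : Type*} [MetricSpace V] {k : ℕ} (hk : 2 ≤ k)
    (u : ℕ → V) :
    ∃ a b, a < b ∧ b < k ∧ dist (u a) (u b) ≤ fdiv ((Finset.range k).image u) := by
  set U := (Finset.range k).image u
  have hmem : ∀ {j}, j < k → u j ∈ U := fun hj => Finset.mem_image_of_mem u (by simpa using hj)
  by_cases hU : (U : Set V).Subsingleton
  · refine ⟨0, 1, one_pos, hk, ?_⟩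
    rw [fdiv_of_subsingleton hU, hU (hmem (by omega : 0 < k)) (hmem hk), dist_self]
  · obtain ⟨x, hx, y, hy, hxy, hdist⟩ := exists_ne_dist_eq_fdiv hU
    obtain ⟨p, hp, rfl⟩ := Finset.mem_image.mp hx
    obtain ⟨q, hq, rfl⟩ := Finset.mem_image.mp hy
    rw [Finset.mem_range] at hp hq
    rcases lt_or_gt_of_ne (ne_of_apply_ne u hxy) with hpq | hqp
    · exact ⟨p, q, hpq, hq, hdist.le⟩
    · exact ⟨q, p, hqp, hp, (dist_comm _ _).trans_le hdist.le⟩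

theorem stmt12 {V : Type*} [MetricSpace V] (k : ℕ) (hk : 2 ≤ k) (u : ℕ → V)
    (hgreedy : ∀ i (hi : 0 < i) (_ : i < k) (v : V),
      (Finset.range i).inf' (Finset.nonempty_range_iff.mpr (by omega)) (fun j => dist (u j) v) ≤
      (Finset.range i).inf' (Finset.nonempty_range_iff.mpr (by omega)) (fun j => dist (u j) (u i))) :
    ∀ v : V, ∃ w ∈ (Finset.range k).image u,
      dist v w ≤ fdiv ((Finset.range k).image u) := by
  intro v
  obtain ⟨a, b, hab, hbk, hdiv⟩ := exists_lt_dist_le_fdiv_image_range hk u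
  have hb : 0 < b := (Nat.zero_le a).trans_lt hab
  obtain ⟨j, hj, hnearest⟩ := Finset.exists_mem_eq_inf'
    (Finset.nonempty_range_iff.mpr hb.ne') (fun j => dist (u j) v)
  rw [Finset.mem_range] at hj
  refine ⟨u j, Finset.mem_image_of_mem u (Finset.mem_range.mpr (hj.trans hbk)), ?_⟩
  calc dist v (u j)
      = (Finset.range b).inf' _ (fun j => dist (u j) v) := by rw [dist_comm, hnearest]
    _ ≤ (Finset.range b).inf' _ (fun j => dist (u j) (u b)) := hgreedy b hb hbk v
    _ ≤ dist (u a) (u b) := Finset.inf'_le _ (Finset.mem_range.mpr hab)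
    _ ≤ fdiv ((Finset.range k).image u) := hdiv
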